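/- Let A, B ∈ ℤ with 0 < A ≤ B, B ≥ 2, 2A − B = 3 and A ≠ B, let M = [[0, −B], [1, −A]] acting on ℝ², and let T be the tile for M and digits {0, …, B−1}·e₁. For digits a₁, a₂, a₁', a₂' ∈ {0, …, B−1} with a₁ − a₁' = 1, the subdivision pieces T_{a₁a₂} and T_{a₁'a₂'} have nonempty intersection if and only if a₂ − a₂' ∈ {A, A−1, A−2}. -/

import Mathlib

noncomputable section

/-- The matrix `[[0, -B], [1, -A]]` as a real matrix. -/
def M' (A B : ℤ) : Matrix (Fin 2) (Fin 2) ℝ := !![0, -(B : ℝ); 1, -(A : ℝ)]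

/-- `e₁ = (1, 0) ∈ ℝ²`. -/
def e1 : Fin 2 → ℝ := ![1, 0]

/-- The subdivision piece `T_{a₁…a_m} = M⁻¹(a₁e₁) + ⋯ + M^{-m}(a_m e₁) + M^{-m}·T`. -/
def subPiece (A B : ℤ) (T : Set (Fin 2 → ℝ)) {m : ℕ} (a : Fin m → ℤ) :
    Set (Fin 2 → ℝ) :=
  (fun x => (∑ i : Fin m, ((M' A B)⁻¹ ^ ((i : ℕ) + 1)).mulVec ((a i : ℝ) • e1))
    + ((M' A B)⁻¹ ^ m).mulVec x) '' T

/-!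
Clearing the common factor `M⁻²`, the two pieces meet iff `(a₂ - a₂', 1) ∈ T - T`.
Writing `M x = x' + j e₁` with `x' ∈ T` for both points of a difference shows that every
`w ∈ T - T` starts an infinite path `w → M w - c e₁` (`|c| ≤ B - 1`) inside the bounded set
`T - T`. Conversely the start `w` of any bounded infinite path lies in `T - T`: the `u` with
`Mⁿ u + wₙ ∈ T - T` form nested nonempty compacts, and a common point has a bounded forward
orbit under the expanding map `M`, so it is `0`.

Along a path the second coordinates `qₙ` satisfy `|qₙ₊₂ + A qₙ₊₁ + B qₙ| ≤ B - 1`. For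
`B = 2A - 3` the polynomial `X² + AX + B` equals `1` at `-2`, and a bounded sequence with this
property has `|qₙ₊₁ + 2qₙ| ≤ 2` and `|qₙ| ≤ 2`; for `q₀ = 1`, `q₁ = a₂ - a₂' - A` this leaves
exactly the three values. Each of them starts a path that runs into an explicit cycle.
-/

section

open Matrix Pointwise Set

theorem IsCompact.sub {G : Type*} [TopologicalSpace G] [AddGroup G] [IsTopologicalAddGroup G]
    {s t : Set G} (hs : IsCompact s) (ht : IsCompact t) : IsCompact (s - t) := by
  rw [sub_eq_add_neg]
  exact hs.add ht.neg

lemma exists_seq_of_forall_exists_rel {α : Type*} {S : Set α} {R : α → α → Prop}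
    (h : ∀ x ∈ S, ∃ y ∈ S, R x y) {x : α} (hx : x ∈ S) :
    ∃ f : ℕ → α, f 0 = x ∧ (∀ n, f n ∈ S) ∧ ∀ n, R (f n) (f (n + 1)) := by
  choose! g hgS hgR using h
  have hS : ∀ n, g^[n] x ∈ S := fun n => by
    induction n with
    | zero => exact hx
    | succ n ih => rw [Function.iterate_succ_apply']; exact hgS _ ih
  exact ⟨fun n => g^[n] x, rfl, hS, fun n => by
    simp only [Function.iterate_succ_apply']; exact hgR _ (hS n)⟩

theorem mul_norm_le_of_norm_recurrence_le {E : Type*} [SeminormedAddCommGroup E] [NormedSpace ℝ E]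
    {a ε : ℝ} (ha : 5 / 2 ≤ a) {v : ℕ → E} (hv : BddAbove (range fun n => ‖v n‖))
    (hrec : ∀ n, ‖v (n + 2) + a • v (n + 1) + (2 * a - 3) • v n‖ ≤ ε) (n : ℕ) :
    (4 * a - 10) * ‖v (n + 1) + (2 : ℝ) • v n‖ ≤ 4 * ε ∧ (4 * a - 10) * ‖v n‖ ≤ 4 * ε := by
  set u : ℕ → E := fun n => v (n + 1) + (2 : ℝ) • v n
  have hYn : ∀ n, ‖v n‖ ≤ ⨆ n, ‖v n‖ := le_ciSup hv
  have hu : BddAbove (range fun n => ‖u n‖) := ⟨3 * ⨆ n, ‖v n‖, by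
    rintro _ ⟨n, rfl⟩
    calc ‖u n‖ ≤ ‖v (n + 1)‖ + ‖(2 : ℝ) • v n‖ := norm_add_le _ _
      _ ≤ 3 * ⨆ n, ‖v n‖ := by rw [norm_smul, Real.norm_two]; linarith [hYn n, hYn (n + 1)]⟩
  set Y := ⨆ n, ‖v n‖
  set U := ⨆ n, ‖u n‖
  have hUn : ∀ n, ‖u n‖ ≤ U := le_ciSup hu
  have hYU : Y ≤ U := by
    suffices Y ≤ (U + Y) / 2 by linarith
    refine ciSup_le fun n => ?_
    have h2v : (2 : ℝ) • v n = u n - v (n + 1) := by simp only [u]; abel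
    have := norm_sub_le (u n) (v (n + 1))
    rw [← h2v, norm_smul, Real.norm_two] at this
    linarith [hUn n, hYn (n + 1)]
  -- The residual controls `u` because `X² + aX + (2a - 3)` takes the value `1` at `-2`.
  have hUε : (4 * a - 10) * U ≤ 4 * ε := by
    have hpos : 0 < 4 * a - 6 := by linarith
    suffices U ≤ (4 * ε + 3 * U + Y) / (4 * a - 6) by
      rw [le_div_iff₀ hpos] at this; linarith
    refine ciSup_le fun n => (le_div_iff₀ hpos).2 ?_
    have hid : (4 * a - 6) • u n = (4 : ℝ) • (v (n + 2) + a • v (n + 1) + (2 * a - 3) • v n)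
        - (3 : ℝ) • u (n + 1) - v (n + 2) := by
      simp only [u]; module
    calc ‖u n‖ * (4 * a - 6) = ‖(4 * a - 6) • u n‖ := by
          rw [norm_smul, Real.norm_of_nonneg hpos.le, mul_comm]
      _ ≤ 4 * ε + 3 * U + Y := by
          rw [hid]
          refine (norm_sub_le _ _).trans ?_
          refine (add_le_add_left (norm_sub_le _ _) _).trans ?_
          simp only [norm_smul, Real.norm_ofNat]
          linarith [hrec n, hUn (n + 1), hYn (n + 2)]
  have h10 : 0 ≤ 4 * a - 10 := by linarith
  exact ⟨(mul_le_mul_of_nonneg_left (hUn n) h10).trans hUε,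
    (mul_le_mul_of_nonneg_left ((hYn n).trans hYU) h10).trans hUε⟩

variable {A B : ℤ}

lemma mulVec_M' (v : Fin 2 → ℝ) : M' A B *ᵥ v = ![-(B : ℝ) * v 1, v 0 - A * v 1] := by
  ext i
  fin_cases i <;> simp [M', mulVec, dotProduct, Fin.sum_univ_two, sub_eq_add_neg]

lemma mulVec_M'_e1 : M' A B *ᵥ e1 = ![0, 1] := by
  rw [mulVec_M']
  simp [e1]

lemma det_M' : (M' A B).det = B := by
  simp [M', det_fin_two]

lemma isUnit_det_M' (hB : B ≠ 0) : IsUnit (M' A B).det := by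
  rw [det_M']
  exact Ne.isUnit (by exact_mod_cast hB)

lemma isUnit_M'_pow (hB : B ≠ 0) (n : ℕ) : IsUnit (M' A B ^ n) :=
  ((isUnit_iff_isUnit_det _).2 (isUnit_det_M' hB)).pow n

lemma mulVec_M'_mulVec_M'_add (v : Fin 2 → ℝ) :
    M' A B *ᵥ (M' A B *ᵥ v) + (A : ℝ) • (M' A B *ᵥ v) + (B : ℝ) • v = 0 := by
  rw [mulVec_M', mulVec_M']
  ext i
  fin_cases i
  · simp; ring
  · simp

lemma eq_zero_of_bddAbove_norm_pow_mulVec (hA : 3 ≤ A) (hB : B = 2 * A - 3) {u : Fin 2 → ℝ}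
    (hu : BddAbove (range fun n => ‖M' A B ^ n *ᵥ u‖)) : u = 0 := by
  set v : ℕ → Fin 2 → ℝ := fun n => M' A B ^ n *ᵥ u
  have hv : ∀ n, v (n + 1) = M' A B *ᵥ v n := fun n => by simp only [v, pow_succ', mulVec_mulVec]
  have hB' : 2 * (A : ℝ) - 3 = B := by rw [hB]; push_cast; ring
  have hA' : (3 : ℝ) ≤ A := by exact_mod_cast hA
  have h := (mul_norm_le_of_norm_recurrence_le (a := A) (ε := 0) (v := v) (by linarith) hu
    (fun n => by rw [hv, hv, hB', mulVec_M'_mulVec_M'_add, norm_zero]) 0).2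
  have : ‖v 0‖ ≤ 0 := by nlinarith [norm_nonneg (v 0)]
  simpa only [v, pow_zero, one_mulVec] using norm_le_zero_iff.1 this

lemma subPiece_inter_nonempty_iff (hB : B ≠ 0) (T : Set (Fin 2 → ℝ)) (a₁ a₂ a₁' a₂' : ℤ) :
    (subPiece A B T ![a₁, a₂] ∩ subPiece A B T ![a₁', a₂']).Nonempty ↔
      ![((a₂ - a₂' : ℤ) : ℝ), ((a₁ - a₁' : ℤ) : ℝ)] ∈ T - T := by
  have hM : M' A B * (M' A B)⁻¹ = 1 := mul_nonsing_inv _ (isUnit_det_M' hB)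
  have hM2 : M' A B ^ 2 * (M' A B)⁻¹ ^ 2 = 1 := by
    rw [inv_pow', mul_nonsing_inv _ ((isUnit_iff_isUnit_det _).1 (isUnit_M'_pow hB 2))]
  have hM1 : M' A B ^ 2 * (M' A B)⁻¹ = M' A B := by rw [sq, mul_assoc, hM, mul_one]
  have key : ∀ (b₁ b₂ : ℤ) (x : Fin 2 → ℝ), M' A B ^ 2 *ᵥ
      (∑ i : Fin 2, ((M' A B)⁻¹ ^ ((i : ℕ) + 1)) *ᵥ ((![b₁, b₂] i : ℝ) • e1)
        + ((M' A B)⁻¹ ^ 2) *ᵥ x) = ![(b₂ : ℝ), b₁] + x := by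
    intro b₁ b₂ x
    simp only [Fin.sum_univ_two, Fin.val_zero, Fin.val_one, zero_add, pow_one, Nat.reduceAdd,
      cons_val_zero, cons_val_one, mulVec_add, mulVec_mulVec, mulVec_smul, hM1, hM2, one_mulVec,
      mulVec_M'_e1]
    ext i
    fin_cases i <;> simp [e1]
  have hinj := mulVec_injective_iff_isUnit.2 (isUnit_M'_pow (A := A) hB 2)
  constructor
  · rintro ⟨z, ⟨x, hx, rfl⟩, x', hx', hz⟩
    have := congrArg (M' A B ^ 2 *ᵥ ·) hz
    simp only [key] at this
    refine ⟨x', hx', x, hx, funext fun i => ?_⟩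
    have := congrFun this i
    fin_cases i <;> simp at this ⊢ <;> linarith
  · rintro ⟨x', hx', x, hx, h⟩
    refine ⟨_, ⟨x, hx, rfl⟩, x', hx', hinj ?_⟩
    simp only [key]
    ext i
    have := congrFun h i
    fin_cases i <;> simp at this ⊢ <;> linarith

def IsSelfAffine (A B : ℤ) (T : Set (Fin 2 → ℝ)) : Prop :=
  (M' A B).mulVec '' T = ⋃ j ∈ Set.Icc (0 : ℤ) (B - 1), (fun x => x + (j : ℝ) • e1) '' T

/-- The edges `w → w'` of the neighbour graph of the tile: `M w - w'` is a difference of two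
digits. -/
def NeighborStep (A B : ℤ) (w w' : Fin 2 → ℝ) : Prop :=
  ∃ c : ℤ, |c| ≤ B - 1 ∧ M' A B *ᵥ w = w' + (c : ℝ) • e1

lemma neighborStep_iff {w w' : Fin 2 → ℝ} : NeighborStep A B w w' ↔
    ∃ c : ℤ, |c| ≤ B - 1 ∧ w' 0 = -B * w 1 - c ∧ w' 1 = w 0 - A * w 1 := by
  simp only [NeighborStep, mulVec_M', funext_iff, Fin.forall_fin_two, e1, Pi.add_apply,
    Pi.smul_apply, cons_val_zero, cons_val_one, smul_eq_mul, mul_one, mul_zero, add_zero]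
  refine exists_congr fun c => and_congr_right fun _ => ?_
  constructor <;> rintro ⟨h0, h1⟩ <;> constructor <;> linarith

lemma neighborStep_vec (c : ℤ) (hc : |c| ≤ B - 1) {x₀ x₁ y₀ y₁ : ℝ} (h₀ : y₀ = -B * x₁ - c)
    (h₁ : y₁ = x₀ - A * x₁) : NeighborStep A B ![x₀, x₁] ![y₀, y₁] :=
  neighborStep_iff.2 ⟨c, hc, h₀, h₁⟩

lemma NeighborStep.abs_add_le {w w' w'' : Fin 2 → ℝ} (h : NeighborStep A B w w')
    (h' : NeighborStep A B w' w'') : |w'' 1 + A * w' 1 + B * w 1| ≤ B - 1 := by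
  obtain ⟨c, hc, h₀, -⟩ := neighborStep_iff.1 h
  obtain ⟨-, -, -, h₁⟩ := neighborStep_iff.1 h'
  have : w'' 1 + A * w' 1 + B * w 1 = -c := by rw [h₁, h₀]; ring
  rw [this, abs_neg]
  exact_mod_cast hc

lemma NeighborStep.add_mulVec {w w' : Fin 2 → ℝ} (h : NeighborStep A B w w') (v : Fin 2 → ℝ) :
    NeighborStep A B (v + w) (M' A B *ᵥ v + w') := by
  obtain ⟨c, hc, hw⟩ := h
  exact ⟨c, hc, by rw [mulVec_add, hw, add_assoc]⟩

namespace IsSelfAffine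

variable {T : Set (Fin 2 → ℝ)}

lemma exists_mulVec_eq_iff (hT : IsSelfAffine A B T) (y : Fin 2 → ℝ) :
    (∃ x ∈ T, M' A B *ᵥ x = y) ↔ ∃ j ∈ Icc (0 : ℤ) (B - 1), ∃ t ∈ T, t + (j : ℝ) • e1 = y := by
  simpa only [mem_image, mem_iUnion, exists_prop] using Set.ext_iff.1 hT y

lemma exists_neighborStep (hT : IsSelfAffine A B T) {w : Fin 2 → ℝ} (hw : w ∈ T - T) :
    ∃ w' ∈ T - T, NeighborStep A B w w' := by
  obtain ⟨x', hx', x, hx, rfl⟩ := hw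
  obtain ⟨j', hj', t', ht', h'⟩ := (hT.exists_mulVec_eq_iff _).1 ⟨x', hx', rfl⟩
  obtain ⟨j, hj, t, ht, h⟩ := (hT.exists_mulVec_eq_iff _).1 ⟨x, hx, rfl⟩
  refine ⟨t' - t, sub_mem_sub ht' ht, j' - j, ?_, ?_⟩
  · rw [mem_Icc] at hj hj'
    rw [abs_le]
    omega
  · rw [mulVec_sub, ← h, ← h']
    push_cast
    module

lemma mem_sub_of_neighborStep (hB : B ≠ 0) (hT : IsSelfAffine A B T) {w w' : Fin 2 → ℝ}
    (h : NeighborStep A B w w') (hw' : w' ∈ T - T) : w ∈ T - T := by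
  obtain ⟨c, hc, hw⟩ := h
  obtain ⟨t', ht', t, ht, rfl⟩ := hw'
  rw [abs_le] at hc
  obtain ⟨x', hx', h'⟩ := (hT.exists_mulVec_eq_iff _).2
    ⟨max c 0, ⟨le_max_right _ _, by omega⟩, t', ht', rfl⟩
  obtain ⟨x, hx, h⟩ := (hT.exists_mulVec_eq_iff _).2
    ⟨max (-c) 0, ⟨le_max_right _ _, by omega⟩, t, ht, rfl⟩
  convert sub_mem_sub hx' hx using 1
  refine mulVec_injective_iff_isUnit.2 (by simpa using isUnit_M'_pow (A := A) hB 1) ?_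
  have hmax : ((max c 0 : ℤ) : ℝ) - ((max (-c) 0 : ℤ) : ℝ) = c := by
    exact_mod_cast max_zero_sub_max_neg_zero_eq_self c
  rw [hw, mulVec_sub, h', h, ← hmax]
  module

theorem subset_sub (hA : 3 ≤ A) (hB : B = 2 * A - 3) (hT : IsSelfAffine A B T)
    (hTne : T.Nonempty) (hTcp : IsCompact T) {S : Set (Fin 2 → ℝ)} (hS : Bornology.IsBounded S)
    (hSstep : ∀ w ∈ S, ∃ w' ∈ S, NeighborStep A B w w') : S ⊆ T - T := by
  intro w hw
  have hB0 : B ≠ 0 := by omega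
  have hN := hTcp.sub hTcp
  obtain ⟨W, rfl, hWS, hWstep⟩ := exists_seq_of_forall_exists_rel hSstep hw
  obtain ⟨C, hC⟩ := isBounded_iff_forall_norm_le.1 hN.isBounded
  obtain ⟨C', hC'⟩ := isBounded_iff_forall_norm_le.1 hS
  set K : ℕ → Set (Fin 2 → ℝ) := fun n => {u | M' A B ^ n *ᵥ u + W n ∈ T - T}
  have hKbdd : ∀ n, ∀ u ∈ K n, ‖M' A B ^ n *ᵥ u‖ ≤ C + C' := fun n u hu =>
    calc ‖M' A B ^ n *ᵥ u‖ = ‖(M' A B ^ n *ᵥ u + W n) - W n‖ := by rw [add_sub_cancel_right]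
      _ ≤ C + C' := (norm_sub_le _ _).trans (add_le_add (hC _ hu) (hC' _ (hWS n)))
  have hKclosed : ∀ n, IsClosed (K n) := fun n =>
    hN.isClosed.preimage ((continuous_const.matrix_mulVec continuous_id).add continuous_const)
  have hKanti : ∀ n, K (n + 1) ⊆ K n := fun n u hu =>
    hT.mem_sub_of_neighborStep hB0 ((hWstep n).add_mulVec _)
      (by rwa [mulVec_mulVec, ← pow_succ'])
  have hKne : ∀ n, (K n).Nonempty := fun n => by
    obtain ⟨x, hx⟩ := hTne
    obtain ⟨u, hu⟩ := mulVec_surjective_iff_isUnit.2 (isUnit_M'_pow hB0 n) (x - x - W n)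
    refine ⟨u, show M' A B ^ n *ᵥ u + W n ∈ T - T from ?_⟩
    rw [hu, sub_add_cancel]
    exact sub_mem_sub hx hx
  have hK0 : IsCompact (K 0) := Metric.isCompact_of_isClosed_isBounded (hKclosed 0)
    (isBounded_iff_forall_norm_le.2 ⟨C + C', fun u hu => by simpa using hKbdd 0 u hu⟩)
  obtain ⟨u, hu⟩ :=
    IsCompact.nonempty_iInter_of_sequence_nonempty_isCompact_isClosed K hKanti hKne hK0 hKclosed
  rw [mem_iInter] at hu
  have hu0 : u = 0 := eq_zero_of_bddAbove_norm_pow_mulVec hA hB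
    ⟨C + C', by rintro _ ⟨n, rfl⟩; exact hKbdd n u (hu n)⟩
  have h0 : M' A B ^ 0 *ᵥ u + W 0 ∈ T - T := hu 0
  rwa [hu0, mulVec_zero, zero_add] at h0

theorem eq_or_eq_or_eq_of_vec_mem_sub (hA : 4 ≤ A) (hB : B = 2 * A - 3) (hT : IsSelfAffine A B T)
    (hTcp : IsCompact T) {D : ℤ} (hD : ![(D : ℝ), 1] ∈ T - T) :
    D = A ∨ D = A - 1 ∨ D = A - 2 := by
  obtain ⟨W, hW0, hWN, hWstep⟩ :=
    exists_seq_of_forall_exists_rel (fun _ => hT.exists_neighborStep) hD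
  obtain ⟨C, hC⟩ := isBounded_iff_forall_norm_le.1 (hTcp.sub hTcp).isBounded
  have hbdd : BddAbove (range fun n => ‖W n 1‖) :=
    ⟨C, by rintro _ ⟨n, rfl⟩; exact (norm_le_pi_norm (W n) 1).trans (hC _ (hWN n))⟩
  have hA' : (4 : ℝ) ≤ A := by exact_mod_cast hA
  have hB' : (B : ℝ) = 2 * A - 3 := by rw [hB]; push_cast; ring
  have hrec : ∀ n, ‖W (n + 2) 1 + (A : ℝ) • W (n + 1) 1 + (2 * (A : ℝ) - 3) • W n 1‖ ≤ B - 1 :=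
    fun n => by
      simpa only [Real.norm_eq_abs, smul_eq_mul, hB'] using (hWstep n).abs_add_le (hWstep (n + 1))
  have hlt : ∀ x : ℝ, (4 * A - 10) * ‖x‖ ≤ 4 * (B - 1) → |x| < 3 := fun x hx => by
    rw [Real.norm_eq_abs] at hx
    by_contra h
    nlinarith
  have hW1 : W 1 1 = ((D - A : ℤ) : ℝ) := by
    obtain ⟨-, -, -, h⟩ := neighborStep_iff.1 (hWstep 0)
    rw [h, hW0]; simp
  have h₀ := hlt _ (mul_norm_le_of_norm_recurrence_le (by linarith) hbdd hrec 0).1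
  have h₁ := hlt _ (mul_norm_le_of_norm_recurrence_le (by linarith) hbdd hrec 1).2
  simp only [hW1, hW0, smul_eq_mul, cons_val_one, cons_val_zero, mul_one, abs_lt] at h₀ h₁
  have hk₁ : -3 < D - A := by exact_mod_cast h₁.1
  have hk₂ : D - A + 2 < 3 := by exact_mod_cast h₀.2
  omega

theorem vec_mem_sub_of_eq_or_eq_or_eq (hA : 4 ≤ A) (hB : B = 2 * A - 3) (hT : IsSelfAffine A B T)
    (hTne : T.Nonempty) (hTcp : IsCompact T) {D : ℤ} (hD : D = A ∨ D = A - 1 ∨ D = A - 2) :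
    ![(D : ℝ), 1] ∈ T - T := by
  have hB' : (B : ℝ) = 2 * A - 3 := by rw [hB]; push_cast; ring
  rcases hD with h | h | h <;> subst D
  · refine hT.subset_sub (S := {![(A : ℝ), 1], ![-1, 0], ![-(A : ℝ), -1], ![1, 0]}) (by omega) hB
      hTne hTcp (toFinite _).isBounded ?_ (mem_insert _ _)
    rintro w (rfl | rfl | rfl | rfl)
    · exact ⟨![-1, 0], by simp, neighborStep_vec (1 - B) (by rw [abs_le]; omega)
        (by push_cast; ring) (by ring)⟩
    · exact ⟨![-A, -1], by simp, neighborStep_vec A (by rw [abs_le]; omega) (by ring) (by ring)⟩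
    · exact ⟨![1, 0], by simp, neighborStep_vec (B - 1) (by rw [abs_le]; omega)
        (by push_cast; ring) (by ring)⟩
    · exact ⟨![A, 1], by simp, neighborStep_vec (-A) (by rw [abs_le]; omega)
        (by push_cast; ring) (by ring)⟩
  · refine hT.subset_sub (S := {![(A : ℝ) - 1, 1], ![1 - (A : ℝ), -1]}) (by omega) hB
      hTne hTcp (toFinite _).isBounded ?_ (by simp)
    rintro w (rfl | rfl)
    · exact ⟨![1 - A, -1], by simp, neighborStep_vec (2 - A) (by rw [abs_le]; omega)
        (by push_cast; linarith) (by ring)⟩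
    · exact ⟨![A - 1, 1], by simp, neighborStep_vec (A - 2) (by rw [abs_le]; omega)
        (by push_cast; linarith) (by ring)⟩
  · refine hT.subset_sub (S := {![(A : ℝ) - 2, 1], ![2 - 2 * (A : ℝ), -2], ![2 * (A : ℝ) - 2, 2]})
      (by omega) hB hTne hTcp (toFinite _).isBounded ?_ (by simp)
    rintro w (rfl | rfl | rfl)
    · exact ⟨![2 - 2 * A, -2], by simp, neighborStep_vec 1 (by rw [abs_le]; omega)
        (by push_cast; linarith) (by ring)⟩
    · exact ⟨![2 * A - 2, 2], by simp, neighborStep_vec (B - 1) (by rw [abs_le]; omega)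
        (by push_cast; linarith) (by ring)⟩
    · exact ⟨![2 - 2 * A, -2], by simp, neighborStep_vec (1 - B) (by rw [abs_le]; omega)
        (by push_cast; linarith) (by ring)⟩

theorem vec_mem_sub_iff (hA : 4 ≤ A) (hB : B = 2 * A - 3) (hT : IsSelfAffine A B T)
    (hTne : T.Nonempty) (hTcp : IsCompact T) (D : ℤ) :
    ![(D : ℝ), 1] ∈ T - T ↔ D = A ∨ D = A - 1 ∨ D = A - 2 :=
  ⟨hT.eq_or_eq_or_eq_of_vec_mem_sub hA hB hTcp, hT.vec_mem_sub_of_eq_or_eq_or_eq hA hB hTne hTcp⟩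

end IsSelfAffine

end

theorem subPiece_two_inter_general
    (A B : ℤ) (hAB : A ≤ B)
    (h3 : 2 * A - B = 3) (hABne : A ≠ B)
    (T : Set (Fin 2 → ℝ)) (hTne : T.Nonempty) (hTcp : IsCompact T)
    (hT : (M' A B).mulVec '' T =
      ⋃ j ∈ Set.Icc (0 : ℤ) (B - 1), (fun x => x + (j : ℝ) • e1) '' T)
    (a₁ a₂ a₁' a₂' : ℤ)
    (hd : a₁ - a₁' = 1) :
    (subPiece A B T ![a₁, a₂] ∩ subPiece A B T ![a₁', a₂']).Nonempty ↔
      a₂ - a₂' = A ∨ a₂ - a₂' = A - 1 ∨ a₂ - a₂' = A - 2 := by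
  rw [subPiece_inter_nonempty_iff (by omega) T, hd, Int.cast_one]
  exact IsSelfAffine.vec_mem_sub_iff (by omega) (by omega) hT hTne hTcp _

/-- For `0 < A ≤ B`, `B ≥ 2`, `2A - B = 3`, `A ≠ B`, and digits
with `a₁ - a₁' = 1`, the pieces `T_{a₁a₂}` and `T_{a₁'a₂'}` intersect iff
`a₂ - a₂' ∈ {A, A-1, A-2}`. -/
theorem subPiece_two_inter
    (A B : ℤ) (hA : 0 < A) (hAB : A ≤ B) (hB : 2 ≤ B)
    (h3 : 2 * A - B = 3) (hABne : A ≠ B)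
    (T : Set (Fin 2 → ℝ)) (hTne : T.Nonempty) (hTcp : IsCompact T)
    (hT : (M' A B).mulVec '' T =
      ⋃ j ∈ Set.Icc (0 : ℤ) (B - 1), (fun x => x + (j : ℝ) • e1) '' T)
    (a₁ a₂ a₁' a₂' : ℤ)
    (ha₁ : a₁ ∈ Set.Icc (0 : ℤ) (B - 1)) (ha₂ : a₂ ∈ Set.Icc (0 : ℤ) (B - 1))
    (ha₁' : a₁' ∈ Set.Icc (0 : ℤ) (B - 1)) (ha₂' : a₂' ∈ Set.Icc (0 : ℤ) (B - 1))
    (hd : a₁ - a₁' = 1) :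
    (subPiece A B T ![a₁, a₂] ∩ subPiece A B T ![a₁', a₂']).Nonempty ↔
      a₂ - a₂' = A ∨ a₂ - a₂' = A - 1 ∨ a₂ - a₂' = A - 2 :=
  subPiece_two_inter_general A B hAB h3 hABne T hTne hTcp hT a₁ a₂ a₁' a₂' hd
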